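/- Let {x_k}, {z_k} be generated by the mirror descent iteration z_{k+1} = z_k − σ s ∇f(x_k), x_{k+1} = ∇φ*(z_{k+1}), with initialization ∇φ*(z₀) = x₀. If the step size satisfies 0 < s ≤ 1/L, then for every k ≥ 1, f(x_k) − f(x*) ≤ D_φ(x*, x₀)/(kσs), where D_φ(x*, x₀) = φ(x*) − φ(x₀) − ⟨z₀, x* − x₀⟩. -/

import Mathlib

/-!
Let `D_k(u) = φ(u) - φ(x_k) - ⟪z_k, u - x_k⟫`. Since `∇φ*` inverts `∂φ`, `z_k` is a subgradient
of `φ` at `x_k`, so `D_k ≥ 0` and, by strong convexity, `D_k(x_{k+1}) ≥ σ/2 ‖x_{k+1} - x_k‖²`.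
The three-point identity `D_k(u) - D_{k+1}(u) = D_k(x_{k+1}) + σs⟪∇f(x_k), x_{k+1} - u⟫`,
the descent lemma for the `L`-smooth `f` and the gradient inequality for convex `f` at `x_k`
then give `σs (f(x_{k+1}) - f(u)) ≤ D_k(u) - D_{k+1}(u)` as soon as `sL ≤ 1`.
With `u = x_k` this shows that `f(x_k)` decreases; with `u = x*` it telescopes to
`kσs (f(x_k) - f(x*)) ≤ D_0(x*)`.
-/

open Set Filter Topology
open scoped RealInnerProductSpace

/-- The Fenchel conjugate of a function on Euclidean space. -/
noncomputable def fenchelConj {n : ℕ} (φ : EuclideanSpace ℝ (Fin n) → ℝ)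
    (z : EuclideanSpace ℝ (Fin n)) : ℝ :=
  ⨆ x : EuclideanSpace ℝ (Fin n), (⟪z, x⟫ - φ x)

variable {E : Type*} [NormedAddCommGroup E] [InnerProductSpace ℝ E]

section FirstOrder

open AffineMap

variable [CompleteSpace E]

lemma HasGradientAt.hasDerivAt_comp_lineMap {f : E → ℝ} {g a b : E} {t : ℝ}
    (hf : HasGradientAt f g (lineMap a b t)) :
    HasDerivAt (fun s ↦ f (lineMap a b s)) ⟪g, b - a⟫ t :=
  (hasGradientAt_iff_hasFDerivAt.mp hf).comp_hasDerivAt t hasDerivAt_lineMap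

lemma ConvexOn.add_inner_le_of_hasGradientAt {f : E → ℝ} {g x : E} (hf : ConvexOn ℝ univ f)
    (hg : HasGradientAt f g x) (y : E) : f x + ⟪g, y - x⟫ ≤ f y := by
  have hconv : ConvexOn ℝ univ (fun t : ℝ ↦ f (lineMap x y t)) :=
    hf.comp_affineMap (lineMap x y)
  have hderiv : HasDerivAt (fun t : ℝ ↦ f (lineMap x y t)) ⟪g, y - x⟫ 0 :=
    HasGradientAt.hasDerivAt_comp_lineMap (by rwa [lineMap_apply_zero])
  have := hconv.le_slope_of_hasDerivAt (mem_univ 0) (mem_univ 1) zero_lt_one hderiv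
  simp only [slope_def_field, lineMap_apply_zero, lineMap_apply_one] at this
  linarith

lemma le_add_inner_add_of_gradient_lipschitz {f : E → ℝ} {f' : E → E} {L : ℝ}
    (hf : ∀ x, HasGradientAt f (f' x) x) (hL : ∀ x y, ‖f' x - f' y‖ ≤ L * ‖x - y‖) (a b : E) :
    f b ≤ f a + ⟪f' a, b - a⟫ + L / 2 * ‖b - a‖ ^ 2 := by
  set h : ℝ → ℝ := fun t ↦ f (lineMap a b t) - t * ⟪f' a, b - a⟫ - L / 2 * ‖b - a‖ ^ 2 * t ^ 2
  have hderiv (t : ℝ) : HasDerivAt h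
      (⟪f' (lineMap a b t), b - a⟫ - ⟪f' a, b - a⟫ - L * ‖b - a‖ ^ 2 * t) t := by
    refine ((((hf _).hasDerivAt_comp_lineMap).sub ((hasDerivAt_id t).mul_const _)).sub
      ((hasDerivAt_pow 2 t).const_mul _)).congr_deriv ?_
    simp only [one_mul, Nat.cast_ofNat]
    ring
  have hnonpos (t : ℝ) (ht : 0 ≤ t) :
      ⟪f' (lineMap a b t), b - a⟫ - ⟪f' a, b - a⟫ - L * ‖b - a‖ ^ 2 * t ≤ 0 := by
    have hdist : ‖lineMap a b t - a‖ = t * ‖b - a‖ := by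
      rw [← dist_eq_norm, dist_lineMap_left, Real.norm_of_nonneg ht, dist_comm, dist_eq_norm]
    refine sub_nonpos.2 ?_
    calc ⟪f' (lineMap a b t), b - a⟫ - ⟪f' a, b - a⟫
        = ⟪f' (lineMap a b t) - f' a, b - a⟫ := (inner_sub_left _ _ _).symm
      _ ≤ ‖f' (lineMap a b t) - f' a‖ * ‖b - a‖ := real_inner_le_norm _ _
      _ ≤ L * ‖lineMap a b t - a‖ * ‖b - a‖ := by gcongr; exact hL _ _
      _ = L * ‖b - a‖ ^ 2 * t := by rw [hdist]; ring
  have hanti : AntitoneOn h (Ici 0) :=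
    antitoneOn_of_hasDerivWithinAt_nonpos (convex_Ici 0)
      (fun t _ ↦ (hderiv t).continuousAt.continuousWithinAt)
      (fun t _ ↦ (hderiv t).hasDerivWithinAt)
      (fun t ht ↦ hnonpos t (interior_subset ht))
  have := hanti self_mem_Ici (show (0:ℝ) ≤ 1 from zero_le_one) zero_le_one
  simp only [h, lineMap_apply_zero, lineMap_apply_one] at this
  linarith

end FirstOrder

def HasSubgradientAt (φ : E → ℝ) (z x : E) : Prop :=
  ∀ y, φ x + ⟪z, y - x⟫ ≤ φ y

/-- `bregmanDiv φ y x z` is `D_φ(y, x)`, computed with the subgradient `z` of `φ` at `x`. -/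
def bregmanDiv (φ : E → ℝ) (y x z : E) : ℝ :=
  φ y - φ x - ⟪z, y - x⟫

lemma HasSubgradientAt.bregmanDiv_nonneg {φ : E → ℝ} {z x : E} (h : HasSubgradientAt φ z x)
    (y : E) : 0 ≤ bregmanDiv φ y x z := by
  unfold bregmanDiv; linarith [h y]

lemma bregmanDiv_self (φ : E → ℝ) (x z : E) : bregmanDiv φ x x z = 0 := by
  simp [bregmanDiv]

lemma bregmanDiv_sub_bregmanDiv (φ : E → ℝ) (u x z x' z' : E) :
    bregmanDiv φ u x z - bregmanDiv φ u x' z' = bregmanDiv φ x' x z + ⟪z' - z, u - x'⟫ := by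
  simp only [bregmanDiv, inner_sub_left, inner_sub_right]; ring

lemma UniformConvexOn.le_bregmanDiv {φ : E → ℝ} {ψ : ℝ → ℝ} (hφ : UniformConvexOn univ ψ φ)
    {z x : E} (hz : HasSubgradientAt φ z x) (y : E) : ψ ‖y - x‖ ≤ bregmanDiv φ y x z := by
  -- compare the subgradient inequality at `x + t (y - x)` with uniform convexity, divide by `t`
  -- and let `t → 0`
  have hineq : ∀ t ∈ Ioo (0:ℝ) 1, φ x + ⟪z, y - x⟫ + (1 - t) * ψ ‖y - x‖ ≤ φ y := by
    rintro t ⟨ht0, ht1⟩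
    have hsub := hz (t • y + (1 - t) • x)
    have hconv := hφ.2 (mem_univ y) (mem_univ x) ht0.le (sub_nonneg.2 ht1.le) (by ring)
    rw [show t • y + (1 - t) • x - x = t • (y - x) by module, real_inner_smul_right] at hsub
    simp only [smul_eq_mul] at hconv
    nlinarith
  have hlim : Tendsto (fun t : ℝ ↦ φ x + ⟪z, y - x⟫ + (1 - t) * ψ ‖y - x‖) (𝓝[>] 0)
      (𝓝 (φ x + ⟪z, y - x⟫ + ψ ‖y - x‖)) := by
    have : Continuous (fun t : ℝ ↦ φ x + ⟪z, y - x⟫ + (1 - t) * ψ ‖y - x‖) := by fun_prop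
    simpa using (this.tendsto 0).mono_left nhdsWithin_le_nhds
  have := le_of_tendsto hlim (eventually_of_mem (Ioo_mem_nhdsGT zero_lt_one) hineq)
  unfold bregmanDiv; linarith

section Coercive

variable {V : Type*} [NormedAddCommGroup V] [NormedSpace ℝ V] {m b : ℝ} {f : V → ℝ}

lemma StrongConvexOn.le_of_one_le_norm (hf : StrongConvexOn univ m f)
    (hb : ∀ u, ‖u‖ ≤ 1 → b ≤ f u) {y : V} (hy : 1 ≤ ‖y‖) :
    ‖y‖ * b - (‖y‖ - 1) * f 0 + m / 2 * (‖y‖ ^ 2 - ‖y‖) ≤ f y := by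
  have hy0 : 0 < ‖y‖ := zero_lt_one.trans_le hy
  have ht : ‖y‖ * ‖y‖⁻¹ = 1 := mul_inv_cancel₀ hy0.ne'
  have ht0 : 0 ≤ ‖y‖⁻¹ := by positivity
  have hconv := hf.2 (mem_univ y) (mem_univ 0) ht0
    (sub_nonneg.2 (inv_le_one_of_one_le₀ hy)) (add_sub_cancel _ 1)
  generalize ‖y‖⁻¹ = t at *
  simp only [smul_zero, add_zero, sub_zero, smul_eq_mul] at hconv
  have hu : b ≤ f (t • y) := hb _ (by rw [norm_smul, Real.norm_of_nonneg ht0, mul_comm, ht])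
  have := mul_le_mul_of_nonneg_left (hu.trans hconv) hy0.le
  calc ‖y‖ * b - (‖y‖ - 1) * f 0 + m / 2 * (‖y‖ ^ 2 - ‖y‖)
      ≤ ‖y‖ * (t * f y + (1 - t) * f 0 - t * (1 - t) * (m / 2 * ‖y‖ ^ 2)) - (‖y‖ - 1) * f 0
          + m / 2 * (‖y‖ ^ 2 - ‖y‖) := by gcongr
    _ = f y := by linear_combination (f y - f 0 - m / 2 * (1 - t) * ‖y‖ ^ 2 + m / 2 * ‖y‖) * ht

lemma StrongConvexOn.tendsto_cocompact_atTop [ProperSpace V] (hm : 0 < m)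
    (hf : StrongConvexOn univ m f) (hcont : Continuous f) : Tendsto f (cocompact V) atTop := by
  obtain ⟨p, -, hp⟩ := (isCompact_closedBall (0 : V) 1).exists_isMinOn
    ⟨0, Metric.mem_closedBall_self zero_le_one⟩ hcont.continuousOn
  set g : ℝ → ℝ := fun r ↦ r * (m / 2 * r + (f p - f 0 - m / 2)) + f 0
  have hg : Tendsto g atTop atTop :=
    tendsto_atTop_add_const_right _ _ <| tendsto_id.atTop_mul_atTop₀ <|
      tendsto_atTop_add_const_right _ _ <| tendsto_id.const_mul_atTop (by positivity)
  refine tendsto_atTop_mono' _ ?_ (hg.comp tendsto_norm_cocompact_atTop)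
  filter_upwards [tendsto_norm_cocompact_atTop.eventually_ge_atTop 1] with y hy
  have := hf.le_of_one_le_norm (fun u hu ↦ hp (mem_closedBall_zero_iff.2 hu)) hy
  simp only [Function.comp_apply, g]
  linarith

lemma StrongConvexOn.exists_forall_le [FiniteDimensional ℝ V] (hm : 0 < m)
    (hf : StrongConvexOn univ m f) : ∃ x, ∀ y, f x ≤ f y := by
  have hcont : Continuous f :=
    continuousOn_univ.1 ((hf.convexOn fun r ↦ by positivity).continuousOn isOpen_univ)
  exact hcont.exists_forall_le (hf.tendsto_cocompact_atTop hm hcont)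

end Coercive

lemma StrongConvexOn.exists_hasSubgradientAt [FiniteDimensional ℝ E] {φ : E → ℝ} {σ : ℝ}
    (hσ : 0 < σ) (hφ : StrongConvexOn univ σ φ) (v : E) : ∃ x, HasSubgradientAt φ v x := by
  have hlin : UniformConcaveOn univ 0 (fun y ↦ ⟪v, y⟫) :=
    uniformConcaveOn_zero.2 ((innerₛₗ ℝ v).concaveOn convex_univ)
  have hsub : StrongConvexOn univ σ (φ - fun y ↦ ⟪v, y⟫) := by
    have := hφ.sub hlin
    rwa [add_zero] at this
  obtain ⟨x, hx⟩ := hsub.exists_forall_le hσ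
  refine ⟨x, fun y ↦ ?_⟩
  have := hx y
  simp only [Pi.sub_apply] at this
  rw [inner_sub_right]
  linarith

section FenchelConjugate

variable {n : ℕ} {φ : EuclideanSpace ℝ (Fin n) → ℝ}

lemma HasSubgradientAt.fenchelConj_eq {w x : EuclideanSpace ℝ (Fin n)}
    (h : HasSubgradientAt φ w x) : fenchelConj φ w = ⟪w, x⟫ - φ x := by
  have hle : ∀ y, ⟪w, y⟫ - φ y ≤ ⟪w, x⟫ - φ x := fun y ↦ by
    have := h y
    rw [inner_sub_right] at this
    linarith
  exact le_antisymm (ciSup_le hle) (le_ciSup ⟨_, forall_mem_range.2 hle⟩ x)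

lemma HasGradientAt.hasSubgradientAt_of_fenchelConj
    (hφ : ∀ w, ∃ x, HasSubgradientAt φ w x) {g v : EuclideanSpace ℝ (Fin n)}
    (hg : HasGradientAt (fenchelConj φ) g v) : HasSubgradientAt φ v g := by
  obtain ⟨x, hx⟩ := hφ v
  -- `w ↦ φ* w - ⟪w, x⟫` is minimal at `v`, so its gradient `g - x` vanishes there
  have hmin : IsMinOn (fun w ↦ fenchelConj φ w - ⟪w, x⟫) univ v := fun w _ ↦ by
    obtain ⟨xw, hxw⟩ := hφ w
    have := hxw x
    show fenchelConj φ v - ⟪v, x⟫ ≤ fenchelConj φ w - ⟪w, x⟫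
    rw [hx.fenchelConj_eq, hxw.fenchelConj_eq]
    rw [inner_sub_right] at this
    linarith
  have hderiv : HasFDerivAt (fun w ↦ fenchelConj φ w - ⟪w, x⟫)
      (InnerProductSpace.toDual ℝ _ (g - x)) v := by
    have hlin : HasFDerivAt (fun w ↦ ⟪w, x⟫) (InnerProductSpace.toDual ℝ _ x) v :=
      (InnerProductSpace.toDual ℝ _ x).hasFDerivAt.congr_of_eventuallyEq <|
        .of_forall fun w ↦ by simp [real_inner_comm]
    rw [map_sub]
    exact (hasGradientAt_iff_hasFDerivAt.mp hg).sub hlin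
  have hgx : g = x := by
    simpa [sub_eq_zero] using (hmin.isLocalMin univ_mem).hasFDerivAt_eq_zero hderiv
  rwa [hgx]

end FenchelConjugate

lemma Antitone.natCast_mul_le_of_le_sub {a D : ℕ → ℝ} (ha : Antitone a) (hD : ∀ k, 0 ≤ D k)
    (h : ∀ k, a (k + 1) ≤ D k - D (k + 1)) (k : ℕ) : k * a k ≤ D 0 := by
  suffices ∀ k : ℕ, k * a k ≤ D 0 - D k by linarith [this k, hD k]
  intro k
  induction k with
  | zero => simp
  | succ k ih =>
    have := ha k.le_succ
    push_cast
    nlinarith [h k]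

section MirrorDescent

variable [CompleteSpace E] {f φ : E → ℝ} {f' : E → E} {σ L η : ℝ} {x z : ℕ → E}

lemma mirrorDescent_step (hf : ConvexOn ℝ univ f) (hf' : ∀ x, HasGradientAt f (f' x) x)
    (hL : ∀ x y, ‖f' x - f' y‖ ≤ L * ‖x - y‖) (hφ : StrongConvexOn univ σ φ)
    (hη : 0 ≤ η) (hηL : η * L ≤ σ) (k : ℕ) (hsub : HasSubgradientAt φ (z k) (x k))
    (hz : z (k + 1) = z k - η • f' (x k)) (u : E) :
    η * (f (x (k + 1)) - f u) ≤
      bregmanDiv φ u (x k) (z k) - bregmanDiv φ u (x (k + 1)) (z (k + 1)) := by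
  rw [bregmanDiv_sub_bregmanDiv, hz, sub_sub_cancel_left, inner_neg_left, real_inner_smul_left]
  have hdesc := le_add_inner_add_of_gradient_lipschitz hf' hL (x k) (x (k + 1))
  have hconv := hf.add_inner_le_of_hasGradientAt (hf' (x k)) u
  have hstrong := UniformConvexOn.le_bregmanDiv hφ hsub (x (k + 1))
  have hlin : f (x (k + 1)) - f u ≤
      -⟪f' (x k), u - x (k + 1)⟫ + L / 2 * ‖x (k + 1) - x k‖ ^ 2 := by
    have : ⟪f' (x k), u - x (k + 1)⟫ = ⟪f' (x k), u - x k⟫ - ⟪f' (x k), x (k + 1) - x k⟫ := by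
      rw [← inner_sub_right, sub_sub_sub_cancel_right]
    linarith
  calc η * (f (x (k + 1)) - f u)
      ≤ η * (-⟪f' (x k), u - x (k + 1)⟫ + L / 2 * ‖x (k + 1) - x k‖ ^ 2) := by gcongr
    _ = -(η * ⟪f' (x k), u - x (k + 1)⟫) + η * L / 2 * ‖x (k + 1) - x k‖ ^ 2 := by ring
    _ ≤ -(η * ⟪f' (x k), u - x (k + 1)⟫) + σ / 2 * ‖x (k + 1) - x k‖ ^ 2 := by gcongr
    _ ≤ _ := by linarith

variable (hf : ConvexOn ℝ univ f) (hf' : ∀ x, HasGradientAt f (f' x) x)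
  (hL : ∀ x y, ‖f' x - f' y‖ ≤ L * ‖x - y‖) (hφ : StrongConvexOn univ σ φ)
  (hsub : ∀ k, HasSubgradientAt φ (z k) (x k)) (hz : ∀ k, z (k + 1) = z k - η • f' (x k))
  (hη : 0 < η) (hηL : η * L ≤ σ)
include hf hf' hL hφ hsub hz hη hηL

lemma mirrorDescent_antitone : Antitone (f ∘ x) := by
  refine antitone_nat_of_succ_le fun k ↦ ?_
  have := mirrorDescent_step hf hf' hL hφ hη.le hηL k (hsub k) (hz k) (x k)
  rw [bregmanDiv_self] at this
  have := (hsub (k + 1)).bregmanDiv_nonneg (x k)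
  simp only [Function.comp_apply]
  nlinarith

lemma mirrorDescent_rate (u : E) (k : ℕ) :
    k * η * (f (x k) - f u) ≤ bregmanDiv φ u (x 0) (z 0) := by
  have hfx := mirrorDescent_antitone hf hf' hL hφ hsub hz hη hηL
  have ha : Antitone fun k ↦ η * (f (x k) - f u) := fun i j hij ↦
    mul_le_mul_of_nonneg_left (sub_le_sub_right (hfx hij) _) hη.le
  rw [mul_assoc]
  exact ha.natCast_mul_le_of_le_sub (fun k ↦ (hsub k).bregmanDiv_nonneg u)
    (fun k ↦ mirrorDescent_step hf hf' hL hφ hη.le hηL k (hsub k) (hz k) u) k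

end MirrorDescent

theorem mirror_descent_function_value_rate_general
{n : ℕ} (f φ : EuclideanSpace ℝ (Fin n) → ℝ)
    (f' gφs : EuclideanSpace ℝ (Fin n) → EuclideanSpace ℝ (Fin n))
    (σ L s : ℝ) (hσ : 0 < σ)
    -- f is convex and differentiable with L-Lipschitz gradient
    (hfconv : ConvexOn ℝ Set.univ f)
    (hfd : ∀ x, HasGradientAt f (f' x) x)
    (hfL : ∀ x y, ‖f' x - f' y‖ ≤ L * ‖x - y‖)
    -- φ is σ-strongly convex
    (hφsc : StrongConvexOn Set.univ σ φ)
    -- φ* is differentiable with gradient gφs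
    (hgφs : ∀ z, HasGradientAt (fenchelConj φ) (gφs z) z)
    -- the mirror descent iteration
    (x z : ℕ → EuclideanSpace ℝ (Fin n))
    (hz : ∀ k : ℕ, z (k + 1) = z k - (σ * s) • f' (x k))
    (hx : ∀ k : ℕ, x (k + 1) = gφs (z (k + 1)))
    (hx0 : gφs (z 0) = x 0)
    (xs : EuclideanSpace ℝ (Fin n))
    (hs : 0 < s) (hsL : s ≤ 1 / L) :
    ∀ k : ℕ, 1 ≤ k →
      f (x k) - f xs ≤ (φ xs - φ (x 0) - ⟪z 0, xs - x 0⟫) / ((k : ℝ) * σ * s) := by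
  intro k hk
  have hxz : ∀ k, x k = gφs (z k) := by
    rintro (_ | k)
    exacts [hx0.symm, hx k]
  have hsub (k : ℕ) : HasSubgradientAt φ (z k) (x k) := by
    rw [hxz]
    exact (hgφs _).hasSubgradientAt_of_fenchelConj (hφsc.exists_hasSubgradientAt hσ)
  have hσsL : σ * s * L ≤ σ := by
    rcases le_or_gt L 0 with hL | hL
    · nlinarith [mul_pos hσ hs]
    · rw [le_div_iff₀ hL] at hsL
      nlinarith
  have hrate := mirrorDescent_rate hfconv hfd hfL hφsc hsub hz (mul_pos hσ hs) hσsL xs k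
  rw [le_div_iff₀ (by positivity)]
  calc (f (x k) - f xs) * (k * σ * s) = k * (σ * s) * (f (x k) - f xs) := by ring
    _ ≤ _ := hrate

/-- Discrete mirror descent with step size `0 < s ≤ 1/L` satisfies
`f(x_k) − f(x*) ≤ D_φ(x*, x₀)/(kσs)` for every `k ≥ 1`. -/
theorem mirror_descent_function_value_rate
{n : ℕ} (f φ : EuclideanSpace ℝ (Fin n) → ℝ)
    (f' gφs : EuclideanSpace ℝ (Fin n) → EuclideanSpace ℝ (Fin n))
    (σ L s : ℝ) (hσ : 0 < σ)
    -- f is convex and differentiable with L-Lipschitz gradient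
    (hfconv : ConvexOn ℝ Set.univ f)
    (hfd : ∀ x, HasGradientAt f (f' x) x)
    (hfL : ∀ x y, ‖f' x - f' y‖ ≤ L * ‖x - y‖)
    -- φ is σ-strongly convex
    (hφsc : StrongConvexOn Set.univ σ φ)
    -- φ* is differentiable with gradient gφs
    (hgφs : ∀ z, HasGradientAt (fenchelConj φ) (gφs z) z)
    -- the mirror descent iteration
    (x z : ℕ → EuclideanSpace ℝ (Fin n))
    (hz : ∀ k : ℕ, z (k + 1) = z k - (σ * s) • f' (x k))
    (hx : ∀ k : ℕ, x (k + 1) = gφs (z (k + 1)))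
    (hx0 : gφs (z 0) = x 0)
    -- x* is a global minimizer of f and ∇φ*(z*) = x*
    (xs zs : EuclideanSpace ℝ (Fin n))
    (hxs : ∀ w, f xs ≤ f w) (hzs : gφs zs = xs)
    (hs : 0 < s) (hsL : s ≤ 1 / L) :
    ∀ k : ℕ, 1 ≤ k →
      f (x k) - f xs ≤ (φ xs - φ (x 0) - ⟪z 0, xs - x 0⟫) / ((k : ℝ) * σ * s) :=
  mirror_descent_function_value_rate_general f φ f' gφs σ L s hσ hfconv hfd hfL hφsc hgφs x z hz hx
    hx0 xs hs hsL
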